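/- Fix β ≥ 0 and h ∈ ℝ, and let σ = (σ_1, …, σ_n) be drawn from the Curie-Weiss Gibbs measure on {-1,1}^n given by P({σ}) = Z^{-1} exp((β/n) Σ_{i<j} σ_i σ_j + β h Σ_i σ_i), where Z is the normalizing constant. Let m = m(σ) := (1/n) Σ_{i=1}^n σ_i be the magnetization. Then for every n ≥ 1 and every t ≥ 0, P(|m - tanh(β m + β h)| ≥ β/n + t/√n) ≤ 2 exp(-t² / (4(1 + β))). -/

import Mathlib

/-!
Write `xᵢ = β (∑_{j ≠ i} σⱼ) / n + β h` for the local field at site `i`, so that `tanh xᵢ` is the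
conditional mean of `σᵢ` given the other spins, and let `g = ∑ᵢ (σᵢ - tanh xᵢ)`. Since `tanh` is
1-Lipschitz and `|xᵢ - (β m + β h)| = β / n`, the quantity `n (m - tanh (β m + β h))` differs from
`g` by at most `β`. Detailed balance under the single spin flips `σ ↦ σ⁽ⁱ⁾` makes each flux
`P(σ) (σᵢ - tanh xᵢ)` antisymmetric under `σ ↦ σ⁽ⁱ⁾`, and `|g(σ) - g(σ⁽ⁱ⁾)| ≤ 2 + 2β`. Chatterjee's
exchangeable-pair argument then bounds the derivative of the moment generating function,
`E[g e^{θ g}] ≤ 2 n (1 + β) θ E[e^{θ g}]`, which integrates to a Gaussian bound on `E[e^{θ g}]`;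
Chernoff's bound finishes the proof.
-/

open Finset Real Function

namespace Real

theorem sinh_le_mul_cosh {x : ℝ} (hx : 0 ≤ x) : sinh x ≤ x * cosh x := by
  have hderiv (y : ℝ) : HasDerivAt (fun u => u * cosh u - sinh u) (y * sinh y) y :=
    (((hasDerivAt_id' y).fun_mul (hasDerivAt_cosh y)).fun_sub (hasDerivAt_sinh y)).congr_deriv
      (by ring)
  have hmono := monotone_of_hasDerivAt_nonneg hderiv fun y => by
    rcases le_total 0 y with hy | hy
    · exact mul_nonneg hy (sinh_nonneg_iff.2 hy)
    · exact mul_nonneg_of_nonpos_of_nonpos hy (sinh_nonpos_iff.2 hy)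
  simpa using hmono hx

theorem abs_exp_sub_exp_le (a b : ℝ) :
    |exp a - exp b| ≤ |a - b| * (exp a + exp b) / 2 := by
  have ha : exp a = exp ((a + b) / 2) * exp ((a - b) / 2) := by rw [← exp_add]; ring_nf
  have hb : exp b = exp ((a + b) / 2) * exp (-((a - b) / 2)) := by rw [← exp_add]; ring_nf
  set d := (a - b) / 2
  have hsub : exp a - exp b = 2 * exp ((a + b) / 2) * sinh d := by
    rw [sinh_eq, ha, hb]; ring
  have hadd : exp a + exp b = 2 * exp ((a + b) / 2) * cosh d := by
    rw [cosh_eq, ha, hb]; ring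
  have hsinh : |sinh d| ≤ |d| * cosh d := by
    rw [abs_sinh, ← cosh_abs]; exact sinh_le_mul_cosh (abs_nonneg d)
  rw [hsub, hadd, abs_mul, abs_of_pos (by positivity : 0 < 2 * exp ((a + b) / 2))]
  calc 2 * exp ((a + b) / 2) * |sinh d| ≤ 2 * exp ((a + b) / 2) * (|d| * cosh d) := by
        gcongr
    _ = |a - b| * (2 * exp ((a + b) / 2) * cosh d) / 2 := by
        simp only [d, abs_div, abs_two]; ring

theorem hasDerivAt_tanh (x : ℝ) : HasDerivAt tanh (1 / cosh x ^ 2) x := by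
  have h := (hasDerivAt_sinh x).div (hasDerivAt_cosh x) (cosh_pos x).ne'
  rw [show tanh = sinh / cosh from funext tanh_eq_sinh_div_cosh]
  exact h.congr_deriv (by rw [← cosh_sq_sub_sinh_sq x]; ring)

theorem abs_tanh_sub_tanh_le (x y : ℝ) : |tanh x - tanh y| ≤ |x - y| := by
  have hlip : LipschitzWith 1 tanh := by
    refine lipschitzWith_of_nnnorm_deriv_le (fun z => (hasDerivAt_tanh z).differentiableAt)
      fun z => ?_
    rw [(hasDerivAt_tanh z).deriv, ← NNReal.coe_le_coe, coe_nnnorm, Real.norm_eq_abs,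
      NNReal.coe_one, abs_of_nonneg (by positivity), div_le_one (by positivity)]
    nlinarith [one_le_cosh z]
  simpa [Real.dist_eq] using hlip.dist_le_mul x y

theorem exp_two_mul_mul_one_sub_tanh (x : ℝ) : exp (2 * x) * (1 - tanh x) = 1 + tanh x := by
  rw [tanh_eq, two_mul, exp_add, exp_neg]
  field_simp
  ring

end Real

theorem le_mul_exp_of_hasDerivAt_le_mul {φ φ' : ℝ → ℝ} {K θ : ℝ}
    (hφ : ∀ u, HasDerivAt φ (φ' u) u) (hφ' : ∀ u, 0 ≤ u → φ' u ≤ K * u * φ u) (hθ : 0 ≤ θ) :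
    φ θ ≤ φ 0 * exp (K * θ ^ 2 / 2) := by
  set ψ : ℝ → ℝ := fun u => φ u * exp (-(K * u ^ 2 / 2))
  have hψ (u : ℝ) : HasDerivAt ψ ((φ' u - K * u * φ u) * exp (-(K * u ^ 2 / 2))) u := by
    have hquad : HasDerivAt (fun u : ℝ => -(K * u ^ 2 / 2)) (-(K * u)) u :=
      ((((hasDerivAt_pow 2 u).const_mul K).div_const 2).fun_neg).congr_deriv (by ring)
    exact ((hφ u).mul hquad.exp).congr_deriv (by ring)
  have hanti : AntitoneOn ψ (Set.Ici 0) := by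
    refine antitoneOn_of_hasDerivWithinAt_nonpos (convex_Ici 0)
      (fun u _ => (hψ u).continuousAt.continuousWithinAt)
      (fun u _ => (hψ u).hasDerivWithinAt) fun u hu => ?_
    rw [interior_Ici, Set.mem_Ioi] at hu
    exact mul_nonpos_of_nonpos_of_nonneg (by linarith [hφ' u hu.le]) (exp_pos _).le
  have hψθ : ψ θ ≤ φ 0 := by simpa [ψ] using hanti Set.self_mem_Ici hθ hθ
  calc φ θ = ψ θ * exp (K * θ ^ 2 / 2) := by
        simp only [ψ, mul_assoc, ← exp_add, neg_add_cancel, exp_zero, mul_one]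
    _ ≤ φ 0 * exp (K * θ ^ 2 / 2) := by gcongr

section Exchangeable

variable {Ω ι : Type*}

theorem sum_filter_le_le_exp_mul_sum [Fintype Ω] (w g : Ω → ℝ) (hw : ∀ s, 0 ≤ w s) {θ : ℝ}
    (hθ : 0 ≤ θ) (a : ℝ) :
    ∑ s ∈ univ.filter (fun s => a ≤ g s), w s ≤ exp (-(θ * a)) * ∑ s, w s * exp (θ * g s) := by
  rw [mul_sum]
  calc ∑ s ∈ univ.filter (fun s => a ≤ g s), w s
      ≤ ∑ s ∈ univ.filter (fun s => a ≤ g s), exp (-(θ * a)) * (w s * exp (θ * g s)) := by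
        refine sum_le_sum fun s hs => ?_
        have hexp : 1 ≤ exp (-(θ * a)) * exp (θ * g s) := by
          rw [← exp_add, one_le_exp_iff]
          nlinarith [(mem_filter.1 hs).2]
        calc w s ≤ w s * (exp (-(θ * a)) * exp (θ * g s)) := le_mul_of_one_le_right (hw s) hexp
          _ = exp (-(θ * a)) * (w s * exp (θ * g s)) := by ring
    _ ≤ ∑ s, exp (-(θ * a)) * (w s * exp (θ * g s)) :=
        sum_le_sum_of_subset_of_nonneg (filter_subset _ _) fun s _ _ => by
          have := hw s; positivity

/-- Discrete form of Chatterjee's exchangeable-pair condition. -/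
structure IsAntisymmDecomposition [Fintype ι] (w g : Ω → ℝ) (τ : ι → Ω → Ω) (A : ι → Ω → ℝ)
    (L c : ℝ) : Prop where
  nonneg : ∀ s, 0 ≤ w s
  involutive : ∀ i, Involutive (τ i)
  mul_eq_sum : ∀ s, w s * g s = ∑ i, A i s
  antisymm : ∀ i s, A i (τ i s) = -A i s
  abs_le : ∀ i s, |A i s| ≤ L * w s
  abs_sub_le : ∀ i s, |g s - g (τ i s)| ≤ c

theorem sum_mul_exp_le_of_antisymm [Fintype Ω] {w g A : Ω → ℝ} {τ : Ω → Ω} (hτ : Involutive τ)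
    (hA : ∀ s, A (τ s) = -A s) {L c u : ℝ} (hAL : ∀ s, |A s| ≤ L * w s)
    (hgc : ∀ s, |g s - g (τ s)| ≤ c) (hu : 0 ≤ u) :
    ∑ s, A s * exp (u * g s) ≤ L * c * u / 2 * ∑ s, w s * exp (u * g s) := by
  set E : Ω → ℝ := fun s => exp (u * g s)
  have hreflect : ∑ s, A s * E (τ s) = -∑ s, A s * E s := by
    rw [← sum_neg_distrib]
    exact Fintype.sum_bijective τ hτ.bijective _ _ fun s => by simp [hA]
  have habs_reflect : ∑ s, |A s| * E (τ s) = ∑ s, |A s| * E s :=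
    Fintype.sum_bijective τ hτ.bijective _ _ fun s => by simp [hA]
  have hterm (s : Ω) : A s * (E s - E (τ s)) ≤ c * u / 2 * (|A s| * E s + |A s| * E (τ s)) := by
    have hdiff : |u * g s - u * g (τ s)| ≤ c * u := by
      rw [← mul_sub, abs_mul, abs_of_nonneg hu, mul_comm]
      exact mul_le_mul_of_nonneg_right (hgc s) hu
    calc A s * (E s - E (τ s)) ≤ |A s| * |E s - E (τ s)| := by
          rw [← abs_mul]; exact le_abs_self _
      _ ≤ |A s| * (|u * g s - u * g (τ s)| * (E s + E (τ s)) / 2) :=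
          mul_le_mul_of_nonneg_left (abs_exp_sub_exp_le _ _) (abs_nonneg _)
      _ ≤ |A s| * (c * u * (E s + E (τ s)) / 2) := by gcongr
      _ = c * u / 2 * (|A s| * E s + |A s| * E (τ s)) := by ring
  have hcu (s : Ω) : 0 ≤ c * u := mul_nonneg ((abs_nonneg _).trans (hgc s)) hu
  have htwice : 2 * ∑ s, A s * E s ≤ 2 * (L * c * u / 2 * ∑ s, w s * E s) :=
    calc 2 * ∑ s, A s * E s = ∑ s, A s * (E s - E (τ s)) := by
          simp only [mul_sub, sum_sub_distrib, hreflect]; ring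
      _ ≤ ∑ s, c * u / 2 * (|A s| * E s + |A s| * E (τ s)) := sum_le_sum fun s _ => hterm s
      _ = ∑ s, c * u * (|A s| * E s) := by
          rw [← mul_sum, sum_add_distrib, habs_reflect, ← mul_sum]
          ring
      _ ≤ ∑ s, c * u * (L * w s * E s) := sum_le_sum fun s _ =>
          mul_le_mul_of_nonneg_left (mul_le_mul_of_nonneg_right (hAL s) (exp_pos _).le) (hcu s)
      _ = 2 * (L * c * u / 2 * ∑ s, w s * E s) := by
          rw [mul_sum, mul_sum]; refine sum_congr rfl fun s _ => by ring
  linarith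

namespace IsAntisymmDecomposition

variable [Fintype ι] {w g : Ω → ℝ} {τ : ι → Ω → Ω} {A : ι → Ω → ℝ} {L c : ℝ}

theorem neg (hD : IsAntisymmDecomposition w g τ A L c) :
    IsAntisymmDecomposition w (-g) τ (-A) L c where
  nonneg := hD.nonneg
  involutive := hD.involutive
  mul_eq_sum s := by simp [hD.mul_eq_sum s]
  antisymm i s := by simp [hD.antisymm i s]
  abs_le i s := by simpa using hD.abs_le i s
  abs_sub_le i s := by simpa [abs_sub_comm, neg_add_eq_sub] using hD.abs_sub_le i s

theorem sum_mul_exp_le [Fintype Ω] (hD : IsAntisymmDecomposition w g τ A L c) {θ : ℝ}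
    (hθ : 0 ≤ θ) :
    ∑ s, w s * exp (θ * g s) ≤ (∑ s, w s) * exp (Fintype.card ι * L * c * θ ^ 2 / 4) := by
  have hderiv (u : ℝ) : HasDerivAt (fun u => ∑ s, w s * exp (u * g s))
      (∑ s, w s * g s * exp (u * g s)) u :=
    HasDerivAt.fun_sum fun s _ =>
      (((hasDerivAt_mul_const (g s)).exp).const_mul (w s)).congr_deriv (by ring)
  have hbound (u : ℝ) (hu : 0 ≤ u) : ∑ s, w s * g s * exp (u * g s)
      ≤ Fintype.card ι * L * c / 2 * u * ∑ s, w s * exp (u * g s) :=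
    calc ∑ s, w s * g s * exp (u * g s) = ∑ i, ∑ s, A i s * exp (u * g s) := by
          simp only [hD.mul_eq_sum, sum_mul]; exact sum_comm
      _ ≤ ∑ _i : ι, L * c * u / 2 * ∑ s, w s * exp (u * g s) := sum_le_sum fun i _ =>
          sum_mul_exp_le_of_antisymm (hD.involutive i) (hD.antisymm i) (hD.abs_le i)
            (hD.abs_sub_le i) hu
      _ = Fintype.card ι * L * c / 2 * u * ∑ s, w s * exp (u * g s) := by
          rw [sum_const, card_univ, nsmul_eq_mul]; ring
  calc ∑ s, w s * exp (θ * g s)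
      ≤ (∑ s, w s * exp (0 * g s)) * exp (Fintype.card ι * L * c / 2 * θ ^ 2 / 2) :=
        le_mul_exp_of_hasDerivAt_le_mul hderiv hbound hθ
    _ = (∑ s, w s) * exp (Fintype.card ι * L * c * θ ^ 2 / 4) := by
        simp only [zero_mul, exp_zero, mul_one]; ring_nf

theorem sum_filter_le_le [Fintype Ω] (hD : IsAntisymmDecomposition w g τ A L c)
    (hK : 0 < Fintype.card ι * L * c) {a : ℝ} (ha : 0 ≤ a) :
    ∑ s ∈ univ.filter (fun s => a ≤ g s), w s
      ≤ exp (-(a ^ 2 / (Fintype.card ι * L * c))) * ∑ s, w s := by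
  set θ := 2 * a / (Fintype.card ι * L * c)
  have hθ : 0 ≤ θ := by positivity
  calc ∑ s ∈ univ.filter (fun s => a ≤ g s), w s ≤ exp (-(θ * a)) * ∑ s, w s * exp (θ * g s) :=
        sum_filter_le_le_exp_mul_sum w g hD.nonneg hθ a
    _ ≤ exp (-(θ * a)) * ((∑ s, w s) * exp (Fintype.card ι * L * c * θ ^ 2 / 4)) := by
        gcongr; exact hD.sum_mul_exp_le hθ
    _ = exp (-(a ^ 2 / (Fintype.card ι * L * c))) * ∑ s, w s := by
        have hopt (K : ℝ) (hK : 0 < K) :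
            -(2 * a / K * a) + K * (2 * a / K) ^ 2 / 4 = -(a ^ 2 / K) := by
          field_simp; ring
        rw [mul_left_comm, ← exp_add, mul_comm, hopt _ hK]

theorem sum_filter_le_abs_le [Fintype Ω] (hD : IsAntisymmDecomposition w g τ A L c)
    (hK : 0 < Fintype.card ι * L * c) {a : ℝ} (ha : 0 ≤ a) :
    ∑ s ∈ univ.filter (fun s => a ≤ |g s|), w s
      ≤ 2 * exp (-(a ^ 2 / (Fintype.card ι * L * c))) * ∑ s, w s := by
  classical
  set P := univ.filter (fun s => a ≤ g s)
  set N := univ.filter (fun s => a ≤ (-g) s)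
  have hunion : univ.filter (fun s => a ≤ |g s|) = P ∪ N := by
    rw [← filter_or]
    simp only [le_abs, Pi.neg_apply]
  have hsplit : ∑ s ∈ P ∪ N, w s ≤ ∑ s ∈ P, w s + ∑ s ∈ N, w s := by
    rw [← sum_union_inter]
    exact le_add_of_nonneg_right (sum_nonneg fun s _ => hD.nonneg s)
  rw [hunion]
  linarith [hD.sum_filter_le_le hK ha, hD.neg.sum_filter_le_le hK ha]

end IsAntisymmDecomposition

end Exchangeable

theorem sq_sum_eq_two_mul_sum_filter_lt_add_sum_sq {ι R : Type*} [Fintype ι] [LinearOrder ι]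
    [CommSemiring R] (x : ι → R) :
    (∑ i, x i) ^ 2
      = 2 * ∑ p ∈ univ.filter (fun p : ι × ι => p.1 < p.2), x p.1 * x p.2 + ∑ i, x i ^ 2 := by
  have hswap : ∑ p ∈ univ.filter (fun p : ι × ι => p.2 < p.1), x p.1 * x p.2
      = ∑ p ∈ univ.filter (fun p : ι × ι => p.1 < p.2), x p.1 * x p.2 :=
    sum_equiv (Equiv.prodComm ι ι) (by simp) (by simp [mul_comm])
  have hdiag : ∑ p ∈ univ.filter (fun p : ι × ι => p.1 = p.2), x p.1 * x p.2 = ∑ i, x i ^ 2 := by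
    rw [sum_filter, Fintype.sum_prod_type]
    simp [sq]
  have htrich : ∀ p : ι × ι, x p.1 * x p.2
      = (if p.1 < p.2 then x p.1 * x p.2 else 0) + (if p.2 < p.1 then x p.1 * x p.2 else 0)
        + (if p.1 = p.2 then x p.1 * x p.2 else 0) := by
    intro p
    rcases lt_trichotomy p.1 p.2 with h | h | h
    · simp [h, h.ne, h.not_gt]
    · simp [h]
    · simp [h, h.ne', h.not_gt]
  rw [sq, sum_mul_sum, ← Fintype.sum_prod_type', Fintype.sum_congr _ _ htrich,
    sum_add_distrib, sum_add_distrib, ← sum_filter, ← sum_filter, ← sum_filter, hswap, hdiag]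
  ring

noncomputable section

namespace CurieWeiss

def spin (b : Bool) : ℝ := if b then 1 else -1

@[simp] theorem spin_not (b : Bool) : spin (!b) = -spin b := by cases b <;> simp [spin]

theorem spin_sq (b : Bool) : spin b ^ 2 = 1 := by cases b <;> simp [spin]

theorem abs_spin (b : Bool) : |spin b| = 1 := by cases b <;> simp [spin]

theorem exp_two_mul_spin_mul_sub_tanh (b : Bool) (x : ℝ) :
    exp (2 * spin b * x) * (spin b - tanh x) = spin b + tanh x := by
  cases b
  · have h := exp_two_mul_mul_one_sub_tanh (-x)
    simp only [tanh_neg, sub_neg_eq_add] at h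
    simp only [spin, Bool.false_eq_true, if_false]
    rw [show 2 * -1 * x = 2 * -x by ring]
    linarith
  · simpa [spin] using exp_two_mul_mul_one_sub_tanh x

section Flip

variable {ι : Type*} [DecidableEq ι]

def flipSpin (i : ι) (s : ι → Bool) : ι → Bool := Function.update s i (!s i)

theorem flipSpin_involutive (i : ι) : Involutive (flipSpin i) := fun s => by
  ext j
  by_cases hj : j = i
  · subst hj; simp [flipSpin]
  · simp [flipSpin, hj]

@[simp] theorem flipSpin_apply_self (i : ι) (s : ι → Bool) : flipSpin i s i = !s i := by
  simp [flipSpin]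

theorem flipSpin_apply_of_ne {i j : ι} (s : ι → Bool) (hj : j ≠ i) : flipSpin i s j = s j := by
  simp [flipSpin, hj]

def totalSpin [Fintype ι] (s : ι → Bool) : ℝ := ∑ i, spin (s i)

theorem totalSpin_flipSpin [Fintype ι] (i : ι) (s : ι → Bool) :
    totalSpin (flipSpin i s) = totalSpin s - 2 * spin (s i) := by
  have hterm (j : ι) :
      spin (flipSpin i s j) = spin (s j) - if j = i then 2 * spin (s i) else 0 := by
    by_cases hj : j = i
    · subst hj; simp only [flipSpin_apply_self, spin_not, if_true]; ring
    · simp [flipSpin_apply_of_ne s hj, hj]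
  simp only [totalSpin, hterm, sum_sub_distrib, sum_ite_eq', mem_univ, if_true]

end Flip

variable {n : ℕ}

def weight (β h : ℝ) (s : Fin n → Bool) : ℝ :=
  exp (β / n * ∑ p ∈ univ.filter (fun p : Fin n × Fin n => p.1 < p.2), spin (s p.1) * spin (s p.2)
    + β * h * totalSpin s)

theorem weight_pos (β h : ℝ) (s : Fin n → Bool) : 0 < weight β h s := exp_pos _

theorem weight_eq (β h : ℝ) (s : Fin n → Bool) :
    weight β h s = exp (β / (2 * n) * (totalSpin s ^ 2 - n) + β * h * totalSpin s) := by
  have hsq := sq_sum_eq_two_mul_sum_filter_lt_add_sum_sq fun i => spin (s i)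
  simp only [spin_sq, sum_const, card_univ, Fintype.card_fin, nsmul_eq_mul, mul_one] at hsq
  rw [weight, totalSpin, hsq]
  congr 1
  ring

def localField (β h : ℝ) (i : Fin n) (s : Fin n → Bool) : ℝ :=
  β * (totalSpin s - spin (s i)) / n + β * h

theorem localField_flipSpin_self (β h : ℝ) (i : Fin n) (s : Fin n → Bool) :
    localField β h i (flipSpin i s) = localField β h i s := by
  simp only [localField, totalSpin_flipSpin, flipSpin_apply_self, spin_not]
  ring

theorem abs_localField_flipSpin_sub_le {β : ℝ} (hβ : 0 ≤ β) (h : ℝ) (i j : Fin n)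
    (s : Fin n → Bool) :
    |localField β h j (flipSpin i s) - localField β h j s| ≤ 2 * β / n := by
  by_cases hj : j = i
  · subst hj
    simp only [localField_flipSpin_self, sub_self, abs_zero]
    positivity
  · have : localField β h j (flipSpin i s) - localField β h j s = -(2 * β * spin (s i) / n) := by
      simp only [localField, totalSpin_flipSpin, flipSpin_apply_of_ne s hj]
      ring
    rw [this, abs_neg, abs_div, abs_mul, abs_spin, mul_one, Nat.abs_cast,
      abs_of_nonneg (by positivity : (0 : ℝ) ≤ 2 * β)]

theorem weight_eq_weight_flipSpin_mul_exp (β h : ℝ) (i : Fin n) (s : Fin n → Bool) :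
    weight β h s = weight β h (flipSpin i s) * exp (2 * spin (s i) * localField β h i s) := by
  rw [weight_eq, weight_eq, ← exp_add, totalSpin_flipSpin, localField]
  congr 1
  ring

def magnetization (s : Fin n → Bool) : ℝ := 1 / n * totalSpin s

theorem abs_localField_sub_le {β : ℝ} (hβ : 0 ≤ β) (h : ℝ) (i : Fin n) (s : Fin n → Bool) :
    |localField β h i s - (β * magnetization s + β * h)| ≤ β / n := by
  have : localField β h i s - (β * magnetization s + β * h) = -(β * spin (s i) / n) := by
    simp only [localField, magnetization]; ring
  rw [this, abs_neg, abs_div, abs_mul, abs_spin, Nat.abs_cast, abs_of_nonneg hβ, mul_one]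

def condMeanDeviation (β h : ℝ) (s : Fin n → Bool) : ℝ :=
  ∑ i, (spin (s i) - tanh (localField β h i s))


theorem abs_condMeanDeviation_sub_flipSpin_le {β : ℝ} (hβ : 0 ≤ β) (h : ℝ) (i : Fin n)
    (s : Fin n → Bool) :
    |condMeanDeviation β h s - condMeanDeviation β h (flipSpin i s)| ≤ 2 + 2 * β := by
  set D : Fin n → ℝ := fun j => tanh (localField β h j (flipSpin i s)) - tanh (localField β h j s)
  have hsplit : condMeanDeviation β h s - condMeanDeviation β h (flipSpin i s)
      = 2 * spin (s i) + ∑ j, D j := by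
    have := totalSpin_flipSpin i s
    simp only [totalSpin] at this
    simp only [D, condMeanDeviation, sum_sub_distrib, this]
    ring
  have hD : ∑ j, |D j| ≤ 2 * β :=
    calc _ ≤ ∑ _j : Fin n, 2 * β / n := sum_le_sum fun j _ =>
          (abs_tanh_sub_tanh_le _ _).trans (abs_localField_flipSpin_sub_le hβ h i j s)
      _ = 2 * β := by
          have hn : (n : ℝ) ≠ 0 := Nat.cast_ne_zero.2 i.pos.ne'
          rw [sum_const, card_univ, Fintype.card_fin, nsmul_eq_mul, mul_div_cancel₀ _ hn]
  rw [hsplit]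
  calc _ ≤ |2 * spin (s i)| + |∑ j, D j| := abs_add_le _ _
    _ ≤ 2 + 2 * β := by
        rw [abs_mul, abs_spin, abs_two, mul_one]
        linarith [abs_sum_le_sum_abs D univ]

theorem mul_abs_magnetization_sub_tanh_le {β : ℝ} (hβ : 0 ≤ β) (h : ℝ) (hn : n ≠ 0)
    (s : Fin n → Bool) :
    n * |magnetization s - tanh (β * magnetization s + β * h)|
      ≤ |condMeanDeviation β h s| + β := by
  set M := β * magnetization s + β * h
  have hsplit : n * (magnetization s - tanh M)
      = condMeanDeviation β h s + ∑ i, (tanh (localField β h i s) - tanh M) := by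
    simp only [condMeanDeviation, magnetization, totalSpin, sum_sub_distrib]
    simp only [one_div, sum_const, card_univ, Fintype.card_fin, nsmul_eq_mul, sub_add_sub_cancel]
    field_simp
  have htanh : ∑ i, |tanh (localField β h i s) - tanh M| ≤ β :=
    calc _ ≤ ∑ _i : Fin n, β / n :=
          sum_le_sum fun i _ => (abs_tanh_sub_tanh_le _ _).trans (abs_localField_sub_le hβ h i s)
      _ = β := by
          rw [sum_const, card_univ, Fintype.card_fin, nsmul_eq_mul]
          field_simp
  rw [← Nat.abs_cast, ← abs_mul, hsplit]
  linarith [abs_add_le (condMeanDeviation β h s) (∑ i, (tanh (localField β h i s) - tanh M)),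
    abs_sum_le_sum_abs (fun i => tanh (localField β h i s) - tanh M) univ]

theorem isAntisymmDecomposition {β : ℝ} (hβ : 0 ≤ β) (h : ℝ) :
    IsAntisymmDecomposition (weight (n := n) β h) (condMeanDeviation β h) flipSpin
      (fun i s => weight β h s * (spin (s i) - tanh (localField β h i s))) 2 (2 + 2 * β) where
  nonneg s := (weight_pos β h s).le
  involutive := flipSpin_involutive
  mul_eq_sum s := mul_sum _ _ _
  antisymm i s := by
    rw [weight_eq_weight_flipSpin_mul_exp β h i s, localField_flipSpin_self, flipSpin_apply_self,
      spin_not, mul_assoc, exp_two_mul_spin_mul_sub_tanh]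
    ring
  abs_le i s := by
    rw [abs_mul, abs_of_pos (weight_pos β h s), mul_comm]
    refine mul_le_mul_of_nonneg_right ?_ (weight_pos β h s).le
    linarith [abs_sub (spin (s i)) (tanh (localField β h i s)), abs_spin (s i),
      abs_tanh_lt_one (localField β h i s)]
  abs_sub_le i s := abs_condMeanDeviation_sub_flipSpin_le hβ h i s

theorem sqrt_mul_le_abs_condMeanDeviation {β : ℝ} (hβ : 0 ≤ β) (h t : ℝ) (hn : n ≠ 0)
    (s : Fin n → Bool)
    (hs : β / n + t / √n ≤ |magnetization s - tanh (β * magnetization s + β * h)|) :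
    √n * t ≤ |condMeanDeviation β h s| := by
  have hn0 : (0 : ℝ) < n := by positivity
  have hthreshold : n * (β / n + t / √n) = β + √n * t := by
    field_simp
    linear_combination (-t) * mul_self_sqrt hn0.le
  linarith [mul_le_mul_of_nonneg_left hs hn0.le, mul_abs_magnetization_sub_tanh_le hβ h hn s]

end CurieWeiss

end

open CurieWeiss

/-- **Proposition 1.3 (magnetization in the Curie–Weiss model).**
Configurations are encoded by `s : Fin n → Bool` with spins `σ s i = ±1`.
The Gibbs weight is `w s = exp((β/n) ∑_{i<j} σ_i σ_j + β h ∑_i σ_i)`, and the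
magnetization is `m s = (1/n) ∑ i, σ s i`. Then for all `t ≥ 0`,
`P(|m - tanh(β m + β h)| ≥ β/n + t/√n) ≤ 2 exp(-t²/(4(1+β)))`, where the probability
of an event is the sum of Gibbs weights over the event divided by the total weight. -/
theorem curie_weiss_magnetization_concentration
    (n : ℕ) (hn : 1 ≤ n) (β h : ℝ) (hβ : 0 ≤ β)
    (σ : (Fin n → Bool) → Fin n → ℝ)
    (hσ : ∀ s i, σ s i = if s i then 1 else -1)
    (w : (Fin n → Bool) → ℝ)
    (hw : ∀ s, w s = Real.exp (β / n *
        (∑ p ∈ Finset.univ.filter (fun p : Fin n × Fin n => p.1 < p.2), σ s p.1 * σ s p.2)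
      + β * h * ∑ i, σ s i))
    (m : (Fin n → Bool) → ℝ) (hm : ∀ s, m s = (1 / n) * ∑ i, σ s i)
    (t : ℝ) (ht : 0 ≤ t) :
    (∑ s ∈ Finset.univ.filter
        (fun s : Fin n → Bool =>
          β / n + t / Real.sqrt n ≤ |m s - Real.tanh (β * m s + β * h)|), w s)
      / (∑ s : Fin n → Bool, w s)
      ≤ 2 * Real.exp (-t ^ 2 / (4 * (1 + β))) := by
  obtain rfl : σ = fun s i => spin (s i) := funext fun s => funext (hσ s)
  obtain rfl : w = weight β h := funext hw
  obtain rfl : m = magnetization := funext hm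
  have hn0 : (0 : ℝ) < n := by exact_mod_cast hn
  have hZ : 0 < ∑ s : Fin n → Bool, weight β h s :=
    sum_pos (fun s _ => weight_pos β h s) univ_nonempty
  rw [div_le_iff₀ hZ]
  calc _ ≤ ∑ s ∈ univ.filter (fun s : Fin n → Bool => √n * t ≤ |condMeanDeviation β h s|),
          weight β h s :=
        sum_le_sum_of_subset_of_nonneg
          (monotone_filter_right _ fun s _ => sqrt_mul_le_abs_condMeanDeviation hβ h t (by omega) s)
          fun s _ _ => (weight_pos β h s).le
    _ ≤ 2 * exp (-((√n * t) ^ 2 / (Fintype.card (Fin n) * 2 * (2 + 2 * β))))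
          * ∑ s, weight β h s :=
        (isAntisymmDecomposition hβ h).sum_filter_le_abs_le
          (by rw [Fintype.card_fin]; positivity) (by positivity)
    _ = 2 * exp (-t ^ 2 / (4 * (1 + β))) * ∑ s, weight β h s := by
        rw [Fintype.card_fin, mul_pow, sq_sqrt hn0.le]
        congr 3
        field_simp
        ring
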